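/- arXiv:math/0204280 — 2 statements merged into one kernel-verified Lean document; each statement's English description precedes it below -/
import Mathlib

section
/- Let (T, m_T, 1_T, μ_T, θ_T) be an A-torsor. Then for all x ∈ T, writing μ_T(x) = x^{(1)} ⊗ x^{(2)} ⊗ x^{(3)} and μ_T(x^{(2)}) = x^{(2)(1)} ⊗ x^{(2)(2)} ⊗ x^{(2)(3)} in Sweedler notation (with implicit summation), one has θ_T(x) = x^{(1)} · x^{(2)(3)} · x^{(2)(2)} · x^{(2)(1)} · x^{(3)}, where the product is taken in T. In particular θ_T is uniquely determined by m_T and μ_T. -/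
/- Common setup: quantum torsors following Grunspan, "Quantum torsors".
   `T` is an `A`-algebra; the torsor law is an algebra morphism
   `μ : T → T ⊗[A] (Tᵐᵒᵖ ⊗[A] (T))` and `θ : T → T` is an algebra automorphism. -/

open scoped TensorProduct
open TensorProduct

namespace QT

variable (A : Type*) [CommRing A] (T : Type*) [Ring T] [Algebra A T]

/-- `unop` as an `A`-linear map. -/
noncomputable def unopL : Tᵐᵒᵖ →ₗ[A] T :=
  (MulOpposite.opLinearEquiv A : T ≃ₗ[A] Tᵐᵒᵖ).symm.toLinearMap

/-- `op` as an `A`-linear map. -/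
noncomputable def opL : T →ₗ[A] Tᵐᵒᵖ :=
  (MulOpposite.opLinearEquiv A : T ≃ₗ[A] Tᵐᵒᵖ).toLinearMap

/-- multiplication of `T` as a linear map. -/
noncomputable def mulTT : T ⊗[A] T →ₗ[A] T := LinearMap.mul' A T

/-- multiplication `Tᵐᵒᵖ ⊗ T → T`, forgetting the `op`s. -/
noncomputable def mulOT : Tᵐᵒᵖ ⊗[A] T →ₗ[A] T :=
  mulTT A T ∘ₗ map (unopL A T) LinearMap.id

/-- multiplication `T ⊗ Tᵐᵒᵖ → T`, forgetting the `op`s. -/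
noncomputable def mulTO : T ⊗[A] Tᵐᵒᵖ →ₗ[A] T :=
  mulTT A T ∘ₗ map LinearMap.id (unopL A T)

/-- the permutation `τ₍₁₃₎` of the outer factors of `T ⊗ Tᵐᵒᵖ ⊗ T`. -/
noncomputable def tau13 : T ⊗[A] (Tᵐᵒᵖ ⊗[A] (T)) ≃ₗ[A] T ⊗[A] (Tᵐᵒᵖ ⊗[A] (T)) :=
  TensorProduct.congr (LinearEquiv.refl A T) (TensorProduct.comm A Tᵐᵒᵖ T) ≪≫ₗ
  (TensorProduct.assoc A T T Tᵐᵒᵖ).symm ≪≫ₗ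
  TensorProduct.congr (TensorProduct.comm A T T) (LinearEquiv.refl A Tᵐᵒᵖ) ≪≫ₗ
  TensorProduct.assoc A T T Tᵐᵒᵖ ≪≫ₗ
  TensorProduct.congr (LinearEquiv.refl A T) (TensorProduct.comm A T Tᵐᵒᵖ)

/-- exchange the `op` pattern `T ⊗ Tᵐᵒᵖ ⊗ T ↦ Tᵐᵒᵖ ⊗ T ⊗ Tᵐᵒᵖ` (identity on elements). -/
noncomputable def oppify : T ⊗[A] (Tᵐᵒᵖ ⊗[A] (T)) →ₗ[A] Tᵐᵒᵖ ⊗[A] (T ⊗[A] (Tᵐᵒᵖ)) :=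
  map (opL A T) (map (unopL A T) (opL A T))

/-- `μᵒᵖ := τ₍₁₃₎ ∘ μ` applied to an element of `Tᵐᵒᵖ`, with the `op`-pattern adjusted. -/
noncomputable def muopO (μ : T →ₗ[A] T ⊗[A] (Tᵐᵒᵖ ⊗[A] (T))) :
    Tᵐᵒᵖ →ₗ[A] Tᵐᵒᵖ ⊗[A] (T ⊗[A] (Tᵐᵒᵖ)) :=
  oppify A T ∘ₗ (tau13 A T).toLinearMap ∘ₗ μ ∘ₗ unopL A T

/-- `θ` viewed as a map of `Tᵐᵒᵖ`. -/
noncomputable def thetaOp (θ : T →ₗ[A] T) : Tᵐᵒᵖ →ₗ[A] Tᵐᵒᵖ :=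
  opL A T ∘ₗ θ ∘ₗ unopL A T

/-- multiplication of the first two factors of `T ⊗ Tᵐᵒᵖ ⊗ T`. -/
noncomputable def m12 : T ⊗[A] (Tᵐᵒᵖ ⊗[A] (T)) →ₗ[A] T ⊗[A] T :=
  map (mulTO A T) LinearMap.id ∘ₗ (TensorProduct.assoc A T Tᵐᵒᵖ T).symm.toLinearMap

/-- `Id ⊗ Id ⊗ μ` on `T ⊗ Tᵐᵒᵖ ⊗ T`. -/
noncomputable def mu3 (μ : T →ₗ[A] T ⊗[A] (Tᵐᵒᵖ ⊗[A] (T))) :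
    T ⊗[A] (Tᵐᵒᵖ ⊗[A] (T)) →ₗ[A] T ⊗[A] (Tᵐᵒᵖ ⊗[A] (T ⊗[A] (Tᵐᵒᵖ ⊗[A] (T)))) :=
  map LinearMap.id (map LinearMap.id μ)

/-- `μ ⊗ Id ⊗ Id` on `T ⊗ Tᵐᵒᵖ ⊗ T` (suitably reassociated). -/
noncomputable def mu1 (μ : T →ₗ[A] T ⊗[A] (Tᵐᵒᵖ ⊗[A] (T))) :
    T ⊗[A] (Tᵐᵒᵖ ⊗[A] (T)) →ₗ[A] T ⊗[A] (Tᵐᵒᵖ ⊗[A] (T ⊗[A] (Tᵐᵒᵖ ⊗[A] (T)))) :=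
  map LinearMap.id (TensorProduct.assoc A Tᵐᵒᵖ T (Tᵐᵒᵖ ⊗[A] T)).toLinearMap ∘ₗ
  (TensorProduct.assoc A T (Tᵐᵒᵖ ⊗[A] T) (Tᵐᵒᵖ ⊗[A] T)).toLinearMap ∘ₗ
  map μ LinearMap.id

/-- `θ` applied to the third of five tensor factors. -/
noncomputable def theta3 (θ : T →ₗ[A] T) :
    T ⊗[A] (Tᵐᵒᵖ ⊗[A] (T ⊗[A] (Tᵐᵒᵖ ⊗[A] (T)))) →ₗ[A] T ⊗[A] (Tᵐᵒᵖ ⊗[A] (T ⊗[A] (Tᵐᵒᵖ ⊗[A] (T)))) :=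
  map LinearMap.id (map LinearMap.id (map θ LinearMap.id))

/-- `Id ⊗ μᵒᵖ ⊗ Id` on `T ⊗ Tᵐᵒᵖ ⊗ T`. -/
noncomputable def muMid (μ : T →ₗ[A] T ⊗[A] (Tᵐᵒᵖ ⊗[A] (T))) :
    T ⊗[A] (Tᵐᵒᵖ ⊗[A] (T)) →ₗ[A] T ⊗[A] (Tᵐᵒᵖ ⊗[A] (T ⊗[A] (Tᵐᵒᵖ ⊗[A] (T)))) :=
  map LinearMap.id
    (map LinearMap.id (TensorProduct.assoc A T Tᵐᵒᵖ T).toLinearMap ∘ₗ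
     (TensorProduct.assoc A Tᵐᵒᵖ (T ⊗[A] Tᵐᵒᵖ) T).toLinearMap ∘ₗ
     map (muopO A T μ) LinearMap.id)

/-- Grunspan's axioms for a quantum torsor `(T, m_T, 1_T, μ, θ)` (Definition 2.1). -/
structure IsTorsor (μ : T →ₗ[A] T ⊗[A] (Tᵐᵒᵖ ⊗[A] (T))) (θ : T →ₗ[A] T) : Prop where
  /-- `μ` is an algebra morphism into `T ⊗ Tᵒᵖ ⊗ T`: unitality -/
  map_one : μ 1 = 1
  /-- `μ` is an algebra morphism into `T ⊗ Tᵒᵖ ⊗ T`: multiplicativity -/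
  map_mul : ∀ x y : T, μ (x * y) = μ x * μ y
  /-- `θ` is an algebra automorphism -/
  theta_one : θ 1 = 1
  theta_mul : ∀ x y : T, θ (x * y) = θ x * θ y
  theta_bij : Function.Bijective θ
  /-- `(Id ⊗ m) ∘ μ (x) = x ⊗ 1` -/
  left_law : ∀ x : T, map LinearMap.id (mulOT A T) (μ x) = x ⊗ₜ[A] (1 : T)
  /-- `(m ⊗ Id) ∘ μ (x) = 1 ⊗ x` -/
  right_law : ∀ x : T, m12 A T (μ x) = (1 : T) ⊗ₜ[A] x
  /-- `(Id ⊗ Id ⊗ μ) ∘ μ = (μ ⊗ Id ⊗ Id) ∘ μ` -/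
  coassoc : ∀ x : T, mu3 A T μ (μ x) = mu1 A T μ (μ x)
  /-- `θ⁽³⁾ ∘ (μ ⊗ Id ⊗ Id) ∘ μ = (Id ⊗ μᵒᵖ ⊗ Id) ∘ μ` -/
  theta_law : ∀ x : T, theta3 A T θ (mu1 A T μ (μ x)) = muMid A T μ (μ x)
  /-- `(θ ⊗ θ ⊗ θ) ∘ μ = μ ∘ θ` -/
  theta_compat : ∀ x : T, map θ (map (thetaOp A T θ) θ) (μ x) = μ (θ x)

/-- multiplication of all five factors of `T ⊗ Tᵐᵒᵖ ⊗ T ⊗ Tᵐᵒᵖ ⊗ T`, in order, in `T`. -/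
noncomputable def mult5 : T ⊗[A] (Tᵐᵒᵖ ⊗[A] (T ⊗[A] (Tᵐᵒᵖ ⊗[A] (T)))) →ₗ[A] T :=
  mulTT A T ∘ₗ
    map LinearMap.id
      (mulOT A T ∘ₗ map LinearMap.id (mulTT A T ∘ₗ map LinearMap.id (mulOT A T)))

/-- the law `μᵒᵖ = τ₍₁₃₎ ∘ μ` of the opposite torsor, as a map on `Tᵐᵒᵖ`. -/
noncomputable def muOpp (μ : T →ₗ[A] T ⊗[A] (Tᵐᵒᵖ ⊗[A] (T))) :
    Tᵐᵒᵖ →ₗ[A] Tᵐᵒᵖ ⊗[A] (Tᵐᵒᵖᵐᵒᵖ ⊗[A] (Tᵐᵒᵖ)) :=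
  map (opL A T) (map (opL A Tᵐᵒᵖ) (opL A T)) ∘ₗ (tau13 A T).toLinearMap ∘ₗ μ ∘ₗ unopL A T

/-- the defining condition of `H_l(T)`: left-hand side. -/
noncomputable def lmapL (μ : T →ₗ[A] T ⊗[A] (Tᵐᵒᵖ ⊗[A] (T))) (θ : T →ₗ[A] T) :
    T ⊗[A] Tᵐᵒᵖ →ₗ[A] T ⊗[A] (Tᵐᵒᵖ ⊗[A] (T ⊗[A] (Tᵐᵒᵖ))) :=
  map LinearMap.id (map LinearMap.id (map θ LinearMap.id)) ∘ₗ
  map LinearMap.id (TensorProduct.assoc A Tᵐᵒᵖ T Tᵐᵒᵖ).toLinearMap ∘ₗ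
  (TensorProduct.assoc A T (Tᵐᵒᵖ ⊗[A] T) Tᵐᵒᵖ).toLinearMap ∘ₗ
  map μ LinearMap.id

/-- the defining condition of `H_l(T)`: right-hand side `(Id ⊗ μᵒᵖ)`. -/
noncomputable def rmapL (μ : T →ₗ[A] T ⊗[A] (Tᵐᵒᵖ ⊗[A] (T))) :
    T ⊗[A] Tᵐᵒᵖ →ₗ[A] T ⊗[A] (Tᵐᵒᵖ ⊗[A] (T ⊗[A] (Tᵐᵒᵖ))) :=
  map LinearMap.id (muopO A T μ)

/-- the subspace `H_l(T) ⊆ T ⊗ Tᵐᵒᵖ`. -/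
noncomputable def Hl (μ : T →ₗ[A] T ⊗[A] (Tᵐᵒᵖ ⊗[A] (T))) (θ : T →ₗ[A] T) :
    Submodule A (T ⊗[A] Tᵐᵒᵖ) :=
  LinearMap.eqLocus (lmapL A T μ θ) (rmapL A T μ)

/-- the defining condition of `H_r(T)`: left-hand side. -/
noncomputable def lmapR (μ : T →ₗ[A] T ⊗[A] (Tᵐᵒᵖ ⊗[A] (T))) (θ : T →ₗ[A] T) :
    Tᵐᵒᵖ ⊗[A] T →ₗ[A] Tᵐᵒᵖ ⊗[A] (T ⊗[A] (Tᵐᵒᵖ ⊗[A] (T))) :=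
  map LinearMap.id (map θ LinearMap.id) ∘ₗ map LinearMap.id μ

/-- the defining condition of `H_r(T)`: right-hand side `(μᵒᵖ ⊗ Id)`. -/
noncomputable def rmapR (μ : T →ₗ[A] T ⊗[A] (Tᵐᵒᵖ ⊗[A] (T))) :
    Tᵐᵒᵖ ⊗[A] T →ₗ[A] Tᵐᵒᵖ ⊗[A] (T ⊗[A] (Tᵐᵒᵖ ⊗[A] (T))) :=
  map LinearMap.id (TensorProduct.assoc A T Tᵐᵒᵖ T).toLinearMap ∘ₗ
  (TensorProduct.assoc A Tᵐᵒᵖ (T ⊗[A] Tᵐᵒᵖ) T).toLinearMap ∘ₗ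
  map (muopO A T μ) LinearMap.id

/-- the subspace `H_r(T) ⊆ Tᵐᵒᵖ ⊗ T`. -/
noncomputable def Hr (μ : T →ₗ[A] T ⊗[A] (Tᵐᵒᵖ ⊗[A] (T))) (θ : T →ₗ[A] T) :
    Submodule A (Tᵐᵒᵖ ⊗[A] T) :=
  LinearMap.eqLocus (lmapR A T μ θ) (rmapR A T μ)

/-- comultiplication `(μ ⊗ Id)` of `H_l(T)`, on the ambient space. -/
noncomputable def deltaL (μ : T →ₗ[A] T ⊗[A] (Tᵐᵒᵖ ⊗[A] (T))) :
    T ⊗[A] Tᵐᵒᵖ →ₗ[A] (T ⊗[A] Tᵐᵒᵖ) ⊗[A] (T ⊗[A] Tᵐᵒᵖ) :=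
  (TensorProduct.assoc A T Tᵐᵒᵖ (T ⊗[A] Tᵐᵒᵖ)).symm.toLinearMap ∘ₗ
  map LinearMap.id (TensorProduct.assoc A Tᵐᵒᵖ T Tᵐᵒᵖ).toLinearMap ∘ₗ
  (TensorProduct.assoc A T (Tᵐᵒᵖ ⊗[A] T) Tᵐᵒᵖ).toLinearMap ∘ₗ
  map μ LinearMap.id

/-- `x ↦ ε(x) • 1` for `H_l(T)`, i.e. `x ↦ m_T(x) ⊗ 1`. -/
noncomputable def epsL : T ⊗[A] Tᵐᵒᵖ →ₗ[A] T ⊗[A] Tᵐᵒᵖ :=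
  (TensorProduct.mk A T Tᵐᵒᵖ).flip 1 ∘ₗ mulTO A T

/-- antipode `x ↦ τ₍₁₂₎ ((Id ⊗ θ) x)` of `H_l(T)`, on the ambient space. -/
noncomputable def antipodeL (θ : T →ₗ[A] T) : T ⊗[A] Tᵐᵒᵖ →ₗ[A] T ⊗[A] Tᵐᵒᵖ :=
  map (unopL A T) (opL A T) ∘ₗ (TensorProduct.comm A T Tᵐᵒᵖ).toLinearMap ∘ₗ
  map LinearMap.id (thetaOp A T θ)

/-- comultiplication `(Id ⊗ μ)` of `H_r(T)`, on the ambient space. -/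
noncomputable def deltaR (μ : T →ₗ[A] T ⊗[A] (Tᵐᵒᵖ ⊗[A] (T))) :
    Tᵐᵒᵖ ⊗[A] T →ₗ[A] (Tᵐᵒᵖ ⊗[A] T) ⊗[A] (Tᵐᵒᵖ ⊗[A] T) :=
  (TensorProduct.assoc A Tᵐᵒᵖ T (Tᵐᵒᵖ ⊗[A] T)).symm.toLinearMap ∘ₗ map LinearMap.id μ

/-- `x ↦ ε(x) • 1` for `H_r(T)`. -/
noncomputable def epsR : Tᵐᵒᵖ ⊗[A] T →ₗ[A] Tᵐᵒᵖ ⊗[A] T :=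
  TensorProduct.mk A Tᵐᵒᵖ T 1 ∘ₗ mulOT A T

/-- antipode of `H_r(T)`, on the ambient space. -/
noncomputable def antipodeR (θ : T →ₗ[A] T) : Tᵐᵒᵖ ⊗[A] T →ₗ[A] Tᵐᵒᵖ ⊗[A] T :=
  map (opL A T) (unopL A T) ∘ₗ (TensorProduct.comm A Tᵐᵒᵖ T).toLinearMap ∘ₗ
  map (thetaOp A T θ) LinearMap.id

/-- `H` is a sub-Hopf-algebra of the `A`-algebra `B` with respect to comultiplication `Δ`,
`unit∘counit = e` and antipode `S` (all given as maps of the ambient algebra; `e x = ε(x) • 1`). -/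
structure IsHopfOn (B : Type*) [Ring B] [Algebra A B] (H : Submodule A B)
    (Δ : B →ₗ[A] B ⊗[A] B) (e : B →ₗ[A] B) (S : B →ₗ[A] B) : Prop where
  one_mem : (1 : B) ∈ H
  mul_mem : ∀ x ∈ H, ∀ y ∈ H, x * y ∈ H
  comul_mem : ∀ x ∈ H, Δ x ∈ LinearMap.range (map H.subtype H.subtype)
  antipode_mem : ∀ x ∈ H, S x ∈ H
  counit_scalar : ∀ x ∈ H, ∃ a : A, e x = a • (1 : B)
  comul_one : Δ 1 = (1 : B) ⊗ₜ[A] (1 : B)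
  comul_mul : ∀ x ∈ H, ∀ y ∈ H, Δ (x * y) = Δ x * Δ y
  counit_one : e 1 = 1
  counit_mul : ∀ x ∈ H, ∀ y ∈ H, e (x * y) = e x * e y
  coassoc : ∀ x ∈ H, map Δ LinearMap.id (Δ x)
      = (TensorProduct.assoc A B B B).symm (map LinearMap.id Δ (Δ x))
  counit_left : ∀ x ∈ H, LinearMap.mul' A B (map e LinearMap.id (Δ x)) = x
  counit_right : ∀ x ∈ H, LinearMap.mul' A B (map LinearMap.id e (Δ x)) = x
  antipode_left : ∀ x ∈ H, LinearMap.mul' A B (map S LinearMap.id (Δ x)) = e x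
  antipode_right : ∀ x ∈ H, LinearMap.mul' A B (map LinearMap.id S (Δ x)) = e x

/-- `φ` restricts to an isomorphism of Hopf algebras between the sub-Hopf-algebra `H` of `B`
(with structure maps `Δ, e, S`) and the sub-Hopf-algebra `H'` of `B'` (with `Δ', e', S'`). -/
structure IsHopfIso {B : Type*} [Ring B] [Algebra A B] {B' : Type*} [Ring B'] [Algebra A B']
    (H : Submodule A B) (Δ : B →ₗ[A] B ⊗[A] B) (e : B →ₗ[A] B) (S : B →ₗ[A] B)
    (H' : Submodule A B') (Δ' : B' →ₗ[A] B' ⊗[A] B') (e' : B' →ₗ[A] B') (S' : B' →ₗ[A] B')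
    (φ : B →ₗ[A] B') : Prop where
  maps_to : ∀ x ∈ H, φ x ∈ H'
  inj : Set.InjOn φ (H : Set B)
  surj : ∀ y ∈ H', ∃ x ∈ H, φ x = y
  map_one : φ 1 = 1
  map_mul : ∀ x ∈ H, ∀ y ∈ H, φ (x * y) = φ x * φ y
  comul_comp : ∀ x ∈ H, map φ φ (Δ x) = Δ' (φ x)
  counit_comp : ∀ x ∈ H, φ (e x) = e' (φ x)
  antipode_comp : ∀ x ∈ H, φ (S x) = S' (φ x)

/-- the left coaction: `μ` with its target reassociated as `(T ⊗ Tᵐᵒᵖ) ⊗ T`. -/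
noncomputable def rhoL (μ : T →ₗ[A] T ⊗[A] (Tᵐᵒᵖ ⊗[A] (T))) :
    T →ₗ[A] (T ⊗[A] Tᵐᵒᵖ) ⊗[A] T :=
  (TensorProduct.assoc A T Tᵐᵒᵖ T).symm.toLinearMap ∘ₗ μ

/-- `(ε ⊗ Id)`-contraction for the left coaction. -/
noncomputable def collapseL : (T ⊗[A] Tᵐᵒᵖ) ⊗[A] T →ₗ[A] T :=
  mulTT A T ∘ₗ map (mulTO A T) LinearMap.id

/-- `(Id ⊗ ε)`-contraction for the right coaction. -/
noncomputable def collapseR : T ⊗[A] (Tᵐᵒᵖ ⊗[A] (T)) →ₗ[A] T :=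
  mulTT A T ∘ₗ map LinearMap.id (mulOT A T)

/-- forget the `op` on the second factor. -/
noncomputable def forgetL : T ⊗[A] Tᵐᵒᵖ ≃ₗ[A] T ⊗[A] T :=
  TensorProduct.congr (LinearEquiv.refl A T) (MulOpposite.opLinearEquiv A : T ≃ₗ[A] Tᵐᵒᵖ).symm

/-- forget the `op` on the first factor. -/
noncomputable def forgetR : Tᵐᵒᵖ ⊗[A] T ≃ₗ[A] T ⊗[A] T :=
  TensorProduct.congr (MulOpposite.opLinearEquiv A : T ≃ₗ[A] Tᵐᵒᵖ).symm (LinearEquiv.refl A T)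

end QT

/-! Multiply out both sides of the axiom `θ⁽³⁾ ∘ (μ ⊗ Id ⊗ Id) ∘ μ = (Id ⊗ μᵒᵖ ⊗ Id) ∘ μ`.
On the left, writing `μ x = x⁽¹⁾ ⊗ x⁽²⁾ ⊗ x⁽³⁾`, the product is
`x⁽¹⁾⁽¹⁾ x⁽¹⁾⁽²⁾ θ(x⁽¹⁾⁽³⁾) x⁽²⁾ x⁽³⁾`; the law `(m ⊗ Id) ∘ μ = 1 ⊗ Id` collapses the first
three factors to `θ(x⁽¹⁾)`, and then `(Id ⊗ m) ∘ μ = Id ⊗ 1` collapses `θ(x⁽¹⁾) x⁽²⁾ x⁽³⁾`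
to `θ x`. -/

namespace QT

variable (A : Type*) [CommRing A] (T : Type*) [Ring T] [Algebra A T]

/-- `a ⊗ b ⊗ c ↦ a * unop b * θ c`. -/
noncomputable def mul3Theta (θ : T →ₗ[A] T) : T ⊗[A] (Tᵐᵒᵖ ⊗[A] T) →ₗ[A] T :=
  mulTT A T ∘ₗ map LinearMap.id θ ∘ₗ m12 A T

variable {A T}

lemma mult5_theta3_assoc (θ : T →ₗ[A] T) (w : T ⊗[A] (Tᵐᵒᵖ ⊗[A] T)) (y : Tᵐᵒᵖ ⊗[A] T) :
    mult5 A T (theta3 A T θ (map LinearMap.id (TensorProduct.assoc A Tᵐᵒᵖ T (Tᵐᵒᵖ ⊗[A] T))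
      (TensorProduct.assoc A T (Tᵐᵒᵖ ⊗[A] T) (Tᵐᵒᵖ ⊗[A] T) (w ⊗ₜ y)))) =
      mul3Theta A T θ w * mulOT A T y := by
  induction w using TensorProduct.induction_on with
  | zero => simp
  | add w w' hw hw' => simp only [add_tmul, map_add, hw, hw', add_mul]
  | tmul a u =>
    induction u using TensorProduct.induction_on with
    | zero => simp
    | add u u' hu hu' => simp only [tmul_add, add_tmul, map_add, hu, hu', add_mul]
    | tmul b c =>
      induction y using TensorProduct.induction_on with
      | zero => simp
      | add y y' hy hy' => simp only [tmul_add, map_add, hy, hy', mul_add]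
      | tmul b' c' =>
        simp [mult5, theta3, mul3Theta, m12, mulTO, mulTT, mulOT, unopL, mul_assoc]

lemma mult5_theta3_mu1 (μ : T →ₗ[A] T ⊗[A] (Tᵐᵒᵖ ⊗[A] T)) (θ : T →ₗ[A] T)
    (z : T ⊗[A] (Tᵐᵒᵖ ⊗[A] T)) :
    mult5 A T (theta3 A T θ (mu1 A T μ z)) =
      mulTT A T (map (mul3Theta A T θ ∘ₗ μ) (mulOT A T) z) := by
  induction z using TensorProduct.induction_on with
  | zero => simp
  | add z z' hz hz' => simp only [map_add, hz, hz']
  | tmul x y => simp [mu1, mult5_theta3_assoc, mulTT]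

lemma mul3Theta_comp_of_right_law {μ : T →ₗ[A] T ⊗[A] (Tᵐᵒᵖ ⊗[A] T)} (θ : T →ₗ[A] T)
    (hr : ∀ x : T, m12 A T (μ x) = (1 : T) ⊗ₜ[A] x) :
    mul3Theta A T θ ∘ₗ μ = θ := by
  ext x
  simp [mul3Theta, hr x, mulTT]

lemma mulTT_map_mulOT_of_left_law {μ : T →ₗ[A] T ⊗[A] (Tᵐᵒᵖ ⊗[A] T)}
    (hl : ∀ x : T, map LinearMap.id (mulOT A T) (μ x) = x ⊗ₜ[A] (1 : T)) (f : T →ₗ[A] T) (x : T) :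
    mulTT A T (map f (mulOT A T) (μ x)) = f x := by
  rw [← LinearMap.comp_id f, ← LinearMap.id_comp (mulOT A T), map_comp, LinearMap.comp_apply,
    hl x]
  simp [mulTT]

theorem IsTorsor.apply_eq_mult5 {μ : T →ₗ[A] T ⊗[A] (Tᵐᵒᵖ ⊗[A] T)} {θ : T →ₗ[A] T}
    (h : IsTorsor A T μ θ) (x : T) : θ x = mult5 A T (muMid A T μ (μ x)) := by
  rw [← h.theta_law, mult5_theta3_mu1, mul3Theta_comp_of_right_law θ h.right_law,
    mulTT_map_mulOT_of_left_law h.left_law]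

end QT

open TensorProduct QT in
theorem theta_formula_general
    (A : Type*) [CommRing A]
    (T : Type*) [Ring T] [Algebra A T]
    (μ : T →ₗ[A] T ⊗[A] (Tᵐᵒᵖ ⊗[A] (T))) (θ : T →ₗ[A] T)
    (h : IsTorsor A T μ θ) :
    (∀ x : T, θ x = mult5 A T (muMid A T μ (μ x))) ∧
    (∀ θ' : T →ₗ[A] T, IsTorsor A T μ θ' → θ' = θ) :=
  ⟨h.apply_eq_mult5, fun _ h' => LinearMap.ext fun x => by
    rw [h'.apply_eq_mult5, h.apply_eq_mult5]⟩

open TensorProduct QT in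
/-- on a torsor, `θ(x) = x⁽¹⁾ x⁽²⁾⁽³⁾ x⁽²⁾⁽²⁾ x⁽²⁾⁽¹⁾ x⁽³⁾`
(the product, in `T`, of the five factors of `(Id ⊗ μᵒᵖ ⊗ Id)(μ(x))` in order);
in particular `θ` is uniquely determined by `m_T` and `μ_T`. -/
theorem theta_formula (k : Type*) [Field k]
    (A : Type*) [CommRing A] [IsDomain A] [Algebra k A]
    (T : Type*) [Ring T] [Algebra A T]
    (μ : T →ₗ[A] T ⊗[A] (Tᵐᵒᵖ ⊗[A] (T))) (θ : T →ₗ[A] T)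
    (h : IsTorsor A T μ θ) :
    (∀ x : T, θ x = mult5 A T (muMid A T μ (μ x))) ∧
    (∀ θ' : T →ₗ[A] T, IsTorsor A T μ θ' → θ' = θ) :=
  theta_formula_general A T μ θ h
end

section
/- Let (T, m_T, 1_T, μ_T, θ_T) be an A-torsor endowed with a commutative law, i.e., μ_T = μ_T^op := τ_(13)∘μ_T. Then H_l(T) = H_r(T) as subsets of T ⊗_A T. -/
/- Common setup: quantum torsors following Grunspan, "Quantum torsors".
   `T` is an `A`-algebra; the torsor law is an algebra morphism
   `μ : T → T ⊗[A] (Tᵐᵒᵖ ⊗[A] (T))` and `θ : T → T` is an algebra automorphism. -/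

open scoped TensorProduct
open TensorProduct

/-!
Under the commutative law, apply the total multiplication `T ⊗ Tᵐᵒᵖ ⊗ T ⊗ Tᵐᵒᵖ ⊗ T → T` to both
sides of the axiom relating `θ` to `μ` and `μᵒᵖ`: the left side collapses to `θ x` by the two
counit laws, and the right side to `x`, because `μᵒᵖ = μ` now collapses by the left counit law.
So `θ = id`, and then, once the `op`s are forgotten, the equations defining `H_l(T)` and `H_r(T)`
both read `(μ ⊗ Id) x = (Id ⊗ μ) x`.
-/

namespace LinearMap

variable {R M N M' N' : Type*} [Semiring R] [AddCommMonoid M] [AddCommMonoid N] [AddCommMonoid M']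
  [AddCommMonoid N'] [Module R M] [Module R N] [Module R M'] [Module R N']

lemma eqLocus_comm (f g : M →ₗ[R] N) : eqLocus f g = eqLocus g f := by
  ext; exact eq_comm

lemma map_eqLocus_of_comp_eq {f g : M →ₗ[R] N} {f' g' : M' →ₗ[R] N'} (e : M ≃ₗ[R] M')
    {Φ : N →ₗ[R] N'} (hΦ : Function.Injective Φ) (hf : Φ ∘ₗ f = f' ∘ₗ e) (hg : Φ ∘ₗ g = g' ∘ₗ e) :
    (eqLocus f g).map e.toLinearMap = eqLocus f' g' := by
  ext y
  rw [Submodule.mem_map_equiv, mem_eqLocus, mem_eqLocus, ← hΦ.eq_iff]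
  simpa using congr($hf (e.symm y) = $hg (e.symm y))

end LinearMap

namespace QT

open MulOpposite

variable {A : Type*} [CommRing A] {T : Type*} [Ring T] [Algebra A T]

@[simp] lemma unopL_apply (t : Tᵐᵒᵖ) : unopL A T t = unop t := rfl

@[simp] lemma mulTT_tmul (a b : T) : mulTT A T (a ⊗ₜ b) = a * b := rfl

@[simp] lemma mulOT_tmul (a : Tᵐᵒᵖ) (b : T) : mulOT A T (a ⊗ₜ b) = unop a * b := rfl

@[simp] lemma mulTO_tmul (a : T) (b : Tᵐᵒᵖ) : mulTO A T (a ⊗ₜ b) = a * unop b := rfl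

@[simp] lemma oppify_tmul (p : T) (q : Tᵐᵒᵖ) (r : T) :
    oppify A T (p ⊗ₜ (q ⊗ₜ r)) = op p ⊗ₜ (unop q ⊗ₜ op r) := rfl

@[simp] lemma m12_tmul (p : T) (q : Tᵐᵒᵖ) (r : T) :
    m12 A T (p ⊗ₜ (q ⊗ₜ r)) = (p * unop q) ⊗ₜ r := rfl

@[simp] lemma collapseR_tmul (p : T) (q : Tᵐᵒᵖ) (r : T) :
    collapseR A T (p ⊗ₜ (q ⊗ₜ r)) = p * (unop q * r) := rfl

lemma tau13_tau13 (m : T ⊗[A] (Tᵐᵒᵖ ⊗[A] T)) : tau13 A T (tau13 A T m) = m :=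
  LinearMap.congr_fun (f := (tau13 A T).toLinearMap ∘ₗ (tau13 A T).toLinearMap) (g := .id)
    (by ext; rfl) m

lemma mult5_comp_theta3_comp_mu1 (μ : T →ₗ[A] T ⊗[A] (Tᵐᵒᵖ ⊗[A] T)) (θ : T →ₗ[A] T) :
    mult5 A T ∘ₗ theta3 A T θ ∘ₗ mu1 A T μ
      = mulTT A T ∘ₗ map (mulTT A T ∘ₗ map .id θ ∘ₗ m12 A T ∘ₗ μ) (mulOT A T) := by
  have hreassoc : mult5 A T ∘ₗ theta3 A T θ ∘ₗ
      map LinearMap.id (TensorProduct.assoc A Tᵐᵒᵖ T (Tᵐᵒᵖ ⊗[A] T)).toLinearMap ∘ₗ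
        (TensorProduct.assoc A T (Tᵐᵒᵖ ⊗[A] T) (Tᵐᵒᵖ ⊗[A] T)).toLinearMap
      = mulTT A T ∘ₗ map (mulTT A T ∘ₗ map .id θ ∘ₗ m12 A T) (mulOT A T) := by
    ext; simp [mult5, theta3, mul_assoc]
  simp only [← LinearMap.comp_assoc] at hreassoc
  simp only [mu1, ← LinearMap.comp_assoc, hreassoc]
  rw [LinearMap.comp_assoc, ← map_comp, LinearMap.comp_id]

lemma mult5_comp_muMid (μ : T →ₗ[A] T ⊗[A] (Tᵐᵒᵖ ⊗[A] T)) :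
    mult5 A T ∘ₗ muMid A T μ
      = mulTT A T ∘ₗ map .id
          (mulTT A T ∘ₗ map (mulOT A T ∘ₗ map .id (mulTO A T) ∘ₗ muopO A T μ) .id) := by
  have hreassoc : mult5 A T ∘ₗ map LinearMap.id
      (map LinearMap.id (TensorProduct.assoc A T Tᵐᵒᵖ T).toLinearMap ∘ₗ
        (TensorProduct.assoc A Tᵐᵒᵖ (T ⊗[A] Tᵐᵒᵖ) T).toLinearMap)
      = mulTT A T ∘ₗ map .id (mulTT A T ∘ₗ map (mulOT A T ∘ₗ map .id (mulTO A T)) .id) := by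
    ext; simp [mult5, mul_assoc]
  have hsplit : muMid A T μ = map LinearMap.id
      (map LinearMap.id (TensorProduct.assoc A T Tᵐᵒᵖ T).toLinearMap ∘ₗ
        (TensorProduct.assoc A Tᵐᵒᵖ (T ⊗[A] Tᵐᵒᵖ) T).toLinearMap) ∘ₗ
      map .id (map (muopO A T μ) .id) := by
    rw [← map_comp]; rfl
  rw [hsplit, ← LinearMap.comp_assoc, hreassoc, LinearMap.comp_assoc, ← map_comp,
    LinearMap.comp_assoc, ← map_comp]
  rfl

lemma mulOT_comp_map_mulTO_comp_oppify :
    mulOT A T ∘ₗ map .id (mulTO A T) ∘ₗ oppify A T = collapseR A T := by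
  ext; simp

lemma muopO_eq_of_comm {μ : T →ₗ[A] T ⊗[A] (Tᵐᵒᵖ ⊗[A] T)} (hc : ∀ x, tau13 A T (μ x) = μ x) :
    muopO A T μ = oppify A T ∘ₗ μ ∘ₗ unopL A T := by
  ext; simp [muopO, hc]

namespace IsTorsor

variable {μ : T →ₗ[A] T ⊗[A] (Tᵐᵒᵖ ⊗[A] T)} {θ : T →ₗ[A] T}

lemma collapseR_comp (h : IsTorsor A T μ θ) : collapseR A T ∘ₗ μ = .id := by
  ext x; simp [collapseR, h.left_law]

lemma mulTT_comp_map_comp_m12_comp (h : IsTorsor A T μ θ) :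
    mulTT A T ∘ₗ map .id θ ∘ₗ m12 A T ∘ₗ μ = θ := by
  ext x; simp [h.right_law]

lemma mulOT_comp_muopO (h : IsTorsor A T μ θ) (hc : ∀ x, tau13 A T (μ x) = μ x) :
    mulOT A T ∘ₗ map .id (mulTO A T) ∘ₗ muopO A T μ = unopL A T := by
  rw [muopO_eq_of_comm hc]
  ext s
  exact (LinearMap.congr_fun mulOT_comp_map_mulTO_comp_oppify (μ (unop s))).trans
    (LinearMap.congr_fun h.collapseR_comp (unop s))

lemma theta_eq_id (h : IsTorsor A T μ θ) (hc : ∀ x, tau13 A T (μ x) = μ x) : θ = .id := by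
  ext x
  have hθ : mult5 A T (theta3 A T θ (mu1 A T μ (μ x))) = θ x := by
    refine (LinearMap.congr_fun (mult5_comp_theta3_comp_mu1 μ θ) (μ x)).trans ?_
    rw [h.mulTT_comp_map_comp_m12_comp, ← LinearMap.comp_id θ, ← LinearMap.id_comp (mulOT A T),
      map_comp, LinearMap.comp_apply, LinearMap.comp_apply, h.left_law]
    simp
  have hid : mult5 A T (muMid A T μ (μ x)) = x := by
    refine (LinearMap.congr_fun (mult5_comp_muMid μ) (μ x)).trans ?_
    rw [h.mulOT_comp_muopO hc]
    exact LinearMap.congr_fun h.collapseR_comp x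
  rw [← hθ, h.theta_law, hid, LinearMap.id_apply]

end IsTorsor

variable (A T) in
noncomputable def opSwap : T ⊗[A] Tᵐᵒᵖ ≃ₗ[A] Tᵐᵒᵖ ⊗[A] T :=
  forgetL A T ≪≫ₗ (forgetR A T).symm

variable (A T) in
noncomputable def opFlip4 :
    T ⊗[A] (Tᵐᵒᵖ ⊗[A] (T ⊗[A] Tᵐᵒᵖ)) ≃ₗ[A] Tᵐᵒᵖ ⊗[A] (T ⊗[A] (Tᵐᵒᵖ ⊗[A] T)) :=
  congr (opLinearEquiv A) (congr (opLinearEquiv A).symm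
    (congr (opLinearEquiv A) (opLinearEquiv A).symm))

lemma opFlip4_tmul_oppify (a : T) (w : T ⊗[A] (Tᵐᵒᵖ ⊗[A] T)) :
    opFlip4 A T (a ⊗ₜ oppify A T w) = op a ⊗ₜ w :=
  LinearMap.congr_fun (show (opFlip4 A T).toLinearMap ∘ₗ mk A T _ a ∘ₗ oppify A T
    = mk A Tᵐᵒᵖ _ (op a) by ext; rfl) w

lemma opFlip4_assoc_tmul (m : T ⊗[A] (Tᵐᵒᵖ ⊗[A] T)) (b : Tᵐᵒᵖ) :
    opFlip4 A T (map .id (TensorProduct.assoc A Tᵐᵒᵖ T Tᵐᵒᵖ).toLinearMap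
        (TensorProduct.assoc A T (Tᵐᵒᵖ ⊗[A] T) Tᵐᵒᵖ (m ⊗ₜ b)))
      = map .id (TensorProduct.assoc A T Tᵐᵒᵖ T).toLinearMap
        (TensorProduct.assoc A Tᵐᵒᵖ (T ⊗[A] Tᵐᵒᵖ) T (oppify A T m ⊗ₜ unop b)) :=
  LinearMap.congr_fun (show (opFlip4 A T).toLinearMap ∘ₗ
      map .id (TensorProduct.assoc A Tᵐᵒᵖ T Tᵐᵒᵖ).toLinearMap ∘ₗ
      (TensorProduct.assoc A T (Tᵐᵒᵖ ⊗[A] T) Tᵐᵒᵖ).toLinearMap ∘ₗ (mk A _ Tᵐᵒᵖ).flip b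
    = map .id (TensorProduct.assoc A T Tᵐᵒᵖ T).toLinearMap ∘ₗ
      (TensorProduct.assoc A Tᵐᵒᵖ (T ⊗[A] Tᵐᵒᵖ) T).toLinearMap ∘ₗ (mk A _ T).flip (unop b) ∘ₗ
      oppify A T by ext; rfl) m

lemma opFlip4_comp_lmapL (μ : T →ₗ[A] T ⊗[A] (Tᵐᵒᵖ ⊗[A] T)) :
    (opFlip4 A T).toLinearMap ∘ₗ lmapL A T μ .id
      = rmapR A T ((tau13 A T).toLinearMap ∘ₗ μ) ∘ₗ (opSwap A T).toLinearMap := by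
  ext a b
  simp [lmapL, rmapR, muopO, opSwap, forgetL, forgetR, tau13_tau13, opFlip4_assoc_tmul]

lemma opFlip4_comp_rmapL (μ : T →ₗ[A] T ⊗[A] (Tᵐᵒᵖ ⊗[A] T)) :
    (opFlip4 A T).toLinearMap ∘ₗ rmapL A T μ
      = lmapR A T ((tau13 A T).toLinearMap ∘ₗ μ) .id ∘ₗ (opSwap A T).toLinearMap := by
  ext a b
  simp [rmapL, lmapR, muopO, opSwap, forgetL, forgetR, opFlip4_tmul_oppify]

end QT

open TensorProduct QT in
theorem Hl_eq_Hr_of_commutative_law_general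
    (A : Type*) [CommRing A]
    (T : Type*) [Ring T] [Algebra A T]
    (μ : T →ₗ[A] T ⊗[A] (Tᵐᵒᵖ ⊗[A] (T))) (θ : T →ₗ[A] T)
    (h : IsTorsor A T μ θ)
    (hc : ∀ x : T, tau13 A T (μ x) = μ x) :
    Submodule.map (forgetL A T).toLinearMap (Hl A T μ θ)
      = Submodule.map (forgetR A T).toLinearMap (Hr A T μ θ) := by
  obtain rfl := h.theta_eq_id hc
  have hμ : (tau13 A T).toLinearMap ∘ₗ μ = μ := LinearMap.ext hc
  have hswap : (Hl A T μ .id).map (opSwap A T).toLinearMap = Hr A T μ .id := by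
    rw [Hr, LinearMap.eqLocus_comm]
    refine LinearMap.map_eqLocus_of_comp_eq _ (opFlip4 A T).injective ?_ ?_
    · rw [opFlip4_comp_lmapL, hμ]
    · rw [opFlip4_comp_rmapL, hμ]
  rw [← hswap, ← Submodule.map_comp]
  congr 1
  ext
  simp [opSwap]

open TensorProduct QT in
/-- Note 3.6: if the torsor is endowed with a commutative law
(`μ_T = τ₍₁₃₎ ∘ μ_T`) then `H_l(T) = H_r(T)` inside `T ⊗ T`. -/
theorem Hl_eq_Hr_of_commutative_law (k : Type*) [Field k]
    (A : Type*) [CommRing A] [IsDomain A] [Algebra k A]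
    (T : Type*) [Ring T] [Algebra A T]
    (μ : T →ₗ[A] T ⊗[A] (Tᵐᵒᵖ ⊗[A] (T))) (θ : T →ₗ[A] T)
    (h : IsTorsor A T μ θ)
    (hc : ∀ x : T, tau13 A T (μ x) = μ x) :
    Submodule.map (forgetL A T).toLinearMap (Hl A T μ θ)
      = Submodule.map (forgetR A T).toLinearMap (Hr A T μ θ) :=
  Hl_eq_Hr_of_commutative_law_general A T μ θ h hc
end
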